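/- Let G be a finite connected locally connected graph of diameter two, let x be a vertex, and let ℓ = line(v,w) for distinct vertices v, w. Then: (i) for every neighbor u of x with u ∉ [v]_x ∪ [w]_x ∪ {v,w}, either [u]_x ⊆ ℓ or [u]_x ∩ ℓ = ∅; (ii) if v and w are neighbors of x and v,w are adjacent, then [v]_x ∪ [w]_x ⊆ ℓ; (iii) if v and w are neighbors of x and v,w are not adjacent, then ([v]_x ∪ [w]_x) ∩ ℓ = {v,w}. -/

import Mathlib

open SimpleGraph

/-- The line defined by two vertices `a` and `b` of a graph: `{a, b}` together with all
vertices `c` lying on a shortest path through `a`, `b` and `c` (in some order). -/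
def SimpleGraph.line {V : Type*} (G : SimpleGraph V) (a b : V) : Set V :=
  {a, b} ∪ {c | G.dist a b = G.dist a c + G.dist c b ∨
                G.dist a c = G.dist a b + G.dist b c ∨
                G.dist b c = G.dist b a + G.dist a c}

/-- The set of all lines of a graph. -/
def SimpleGraph.lineSet {V : Type*} (G : SimpleGraph V) : Set (Set V) :=
  {s | ∃ a b : V, a ≠ b ∧ s = G.line a b}

/-- A graph is locally connected if the subgraph induced on each neighborhood is connected. -/
def SimpleGraph.LocallyConnected {V : Type*} (G : SimpleGraph V) : Prop :=
  ∀ v : V, (G.induce (G.neighborSet v)).Connected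

/-- The class `[u]_z`: all vertices `w ≠ z` defining the same line with `z` as `u` does. -/
def SimpleGraph.lineClass {V : Type*} (G : SimpleGraph V) (z u : V) : Set V :=
  {w | w ≠ z ∧ G.line z w = G.line z u}

/-! In a connected graph of diameter at most two, `c` lies on the line of two adjacent vertices
iff it is not equidistant from them, and the line of two vertices at distance two consists of
them and their common neighbours. If `u ~ x` and `u' ∈ [u]_x` were not adjacent to `x`, then `u`
would be a common neighbour of `x` and `u'`, and local connectedness at `u` would give a common
neighbour `q` of `u` and `u'`; such a `q` lies on `line(x,u')` iff `q ~ x`, but on `line(x,u)` iff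
`q ≁ x`. So `[u]_x` consists of neighbours of `x`, and comparing distances shows that they are `u`
and non-adjacent twins of `u` (same neighbourhood). Twins have the same distances to every other
vertex, so no line through two vertices other than them separates them. -/

namespace SimpleGraph

variable {V : Type*} {G : SimpleGraph V} {a b c u u' v w x : V}

lemma left_mem_line (a b : V) : a ∈ G.line a b := Or.inl (Or.inl rfl)

lemma right_mem_line (a b : V) : b ∈ G.line a b := Or.inl (Or.inr rfl)

lemma line_comm (a b : V) : G.line a b = G.line b a := by
  ext c
  simp only [line, Set.mem_union, Set.mem_insert_iff, Set.mem_singleton_iff, Set.mem_ofPred_eq]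
  rw [dist_comm (u := b) (v := a), dist_comm (u := b) (v := c), dist_comm (u := c) (v := a),
    add_comm (G.dist c b)]
  tauto

lemma mem_lineClass_self (h : u ≠ x) : u ∈ G.lineClass x u := ⟨h, rfl⟩

lemma mem_line_iff_of_adj (hG : G.Connected) (hab : G.Adj a b) :
    c ∈ G.line a b ↔ G.dist c a ≠ G.dist c b := by
  have hab₁ : G.dist a b = 1 := dist_eq_one_iff_adj.mpr hab
  have hcab := hG.dist_triangle (u := c) (v := a) (w := b)
  have hcba := hG.dist_triangle (u := c) (v := b) (w := a)
  have hacb := hG.dist_triangle (u := a) (v := c) (w := b)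
  simp only [line, Set.mem_union, Set.mem_insert_iff, Set.mem_singleton_iff, Set.mem_ofPred_eq]
  rw [eq_comm (a := c), eq_comm (a := c), ← hG.dist_eq_zero_iff, ← hG.dist_eq_zero_iff,
    dist_comm (u := b) (v := a), dist_comm (u := c) (v := a), dist_comm (u := c) (v := b)]
    at *
  omega

lemma mem_line_iff_of_dist_eq (hv : G.dist v u = G.dist v u') (hw : G.dist w u = G.dist w u')
    (huv : u ≠ v) (huw : u ≠ w) (hu'v : u' ≠ v) (hu'w : u' ≠ w) :
    u ∈ G.line v w ↔ u' ∈ G.line v w := by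
  simp only [line, Set.mem_union, Set.mem_insert_iff, Set.mem_singleton_iff, Set.mem_ofPred_eq,
    huv, huw, hu'v, hu'w, hv, dist_comm (u := u) (v := w), dist_comm (u := u') (v := w), hw]

lemma LocallyConnected.exists_adj_adj (hlc : G.LocallyConnected) (hau : G.Adj a u)
    (hab : G.Adj a b) (hne : u ≠ b) : ∃ q, G.Adj a q ∧ G.Adj u q := by
  obtain ⟨p⟩ := (hlc a).preconnected ⟨u, hau⟩ ⟨b, hab⟩
  have hlen : p.length ≠ 0 := fun h => hne (congrArg Subtype.val (Walk.eq_of_length_eq_zero h))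
  have hadj := p.adj_getVert_succ (i := 0) (Nat.pos_of_ne_zero hlen)
  rw [Walk.getVert_zero] at hadj
  exact ⟨(p.getVert 1).1, (p.getVert 1).2, hadj⟩

section DiameterTwo

variable (hG : G.Connected) (hd : G.ediam ≤ 2)
include hd

lemma dist_le_two_of_ediam_le_two (a b : V) : G.dist a b ≤ 2 :=
  ENat.toNat_le_of_le_natCast (edist_le_ediam.trans hd)

include hG

lemma dist_eq_two_of_not_adj (hne : a ≠ b) (hab : ¬ G.Adj a b) : G.dist a b = 2 := by
  have h0 := hG.pos_dist_of_ne hne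
  have h1 : G.dist a b ≠ 1 := fun h => hab (dist_eq_one_iff_adj.mp h)
  have := dist_le_two_of_ediam_le_two hd a b
  omega

lemma mem_line_iff_of_dist_eq_two (hab : G.dist a b = 2) :
    c ∈ G.line a b ↔ c = a ∨ c = b ∨ (G.Adj a c ∧ G.Adj c b) := by
  by_cases hca : c = a
  · subst hca
    exact iff_of_true (left_mem_line c b) (Or.inl rfl)
  by_cases hcb : c = b
  · subst hcb
    exact iff_of_true (right_mem_line a c) (Or.inr (Or.inl rfl))
  have hac := dist_le_two_of_ediam_le_two hd a c
  have hbc := dist_le_two_of_ediam_le_two hd b c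
  have hac₀ := hG.pos_dist_of_ne (Ne.symm hca)
  have hbc₀ := hG.pos_dist_of_ne (Ne.symm hcb)
  simp only [line, Set.mem_union, Set.mem_insert_iff, Set.mem_singleton_iff, Set.mem_ofPred_eq,
    hca, hcb, false_or, ← dist_eq_one_iff_adj]
  rw [dist_comm (u := c) (v := b), dist_comm (u := b) (v := a)]
  omega

lemma dist_eq_of_neighborSet_eq (h : G.neighborSet u = G.neighborSet u') (hcu : c ≠ u)
    (hcu' : c ≠ u') : G.dist c u = G.dist c u' := by
  have hadj : G.Adj c u ↔ G.Adj c u' := by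
    rw [adj_comm, ← mem_neighborSet, h, mem_neighborSet, adj_comm]
  by_cases hcu₁ : G.Adj c u
  · rw [dist_eq_one_iff_adj.mpr hcu₁, dist_eq_one_iff_adj.mpr (hadj.mp hcu₁)]
  · rw [dist_eq_two_of_not_adj hG hd hcu hcu₁,
      dist_eq_two_of_not_adj hG hd hcu' (hcu₁ ∘ hadj.mpr)]

variable (hlc : G.LocallyConnected)
include hlc

lemma adj_of_mem_lineClass (hxu : G.Adj x u) (hu' : u' ∈ G.lineClass x u) : G.Adj x u' := by
  obtain ⟨hu'x, hline⟩ := hu'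
  by_contra hxu'
  have h2 : G.dist x u' = 2 := dist_eq_two_of_not_adj hG hd hu'x.symm hxu'
  have huu' : G.Adj u u' := by
    have hu : u ∈ G.line x u' := hline ▸ right_mem_line x u
    rcases (mem_line_iff_of_dist_eq_two hG hd h2).mp hu with h | h | ⟨-, h⟩
    · exact absurd h hxu.ne'
    · exact absurd (h ▸ hxu) hxu'
    · exact h
  obtain ⟨q, huq, hu'q⟩ := hlc.exists_adj_adj huu' hxu.symm hu'x
  have hqx : q ≠ x := fun h => hxu' (h ▸ hu'q).symm
  have h₁ : q ∈ G.line x u' ↔ G.Adj x q := by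
    rw [mem_line_iff_of_dist_eq_two hG hd h2]
    simp only [hqx, hu'q.ne', hu'q.symm, and_true, false_or]
  have h₂ : q ∈ G.line x u ↔ ¬ G.Adj x q := by
    rw [mem_line_iff_of_adj hG hxu, dist_eq_one_iff_adj.mpr huq.symm, Ne, dist_eq_one_iff_adj,
      adj_comm]
  rw [hline] at h₁
  exact iff_not_self (h₁.symm.trans h₂)

lemma eq_or_twin_of_mem_lineClass (hxu : G.Adj x u) (hu' : u' ∈ G.lineClass x u) :
    u' = u ∨ ¬ G.Adj u u' ∧ G.neighborSet u = G.neighborSet u' := by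
  have hxu' := adj_of_mem_lineClass hG hd hlc hxu hu'
  have hline (c : V) : G.dist c x ≠ G.dist c u' ↔ G.dist c x ≠ G.dist c u := by
    rw [← mem_line_iff_of_adj hG hxu, ← mem_line_iff_of_adj hG hxu', hu'.2]
  refine or_iff_not_imp_left.mpr fun hne => ?_
  have hnadj : ¬ G.Adj u u' := by
    have h := (hline u').mp (by rw [dist_self, dist_eq_one_iff_adj.mpr hxu'.symm]; omega)
    rwa [dist_eq_one_iff_adj.mpr hxu'.symm, Ne, eq_comm, dist_eq_one_iff_adj, adj_comm] at h
  refine ⟨hnadj, Set.ext fun c => ?_⟩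
  rw [mem_neighborSet, mem_neighborSet]
  by_cases hcx : c = x
  · subst hcx
    exact iff_of_true hxu.symm hxu'.symm
  by_cases hcu : c = u
  · subst hcu
    exact iff_of_false G.irrefl fun h => hnadj h.symm
  by_cases hcu' : c = u'
  · subst hcu'
    exact iff_of_false hnadj G.irrefl
  -- distances from `c` to `x`, `u`, `u'` lie in `{1, 2}`, so `hline c` forces `d(c,u) = d(c,u')`
  have := hline c
  have := hG.pos_dist_of_ne hcx
  have := hG.pos_dist_of_ne hcu
  have := hG.pos_dist_of_ne hcu'
  have := dist_le_two_of_ediam_le_two hd c x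
  have := dist_le_two_of_ediam_le_two hd c u
  have := dist_le_two_of_ediam_le_two hd c u'
  rw [G.adj_comm u, G.adj_comm u', ← dist_eq_one_iff_adj, ← dist_eq_one_iff_adj]
  omega

lemma lineClass_subset_line_or_inter_line_eq_empty (hxu : G.Adj x u)
    (hu : u ∉ G.lineClass x v ∪ G.lineClass x w ∪ {v, w}) :
    G.lineClass x u ⊆ G.line v w ∨ G.lineClass x u ∩ G.line v w = ∅ := by
  simp only [Set.mem_union, Set.mem_insert_iff, Set.mem_singleton_iff, not_or] at hu
  obtain ⟨⟨hu_nmem_v, hu_nmem_w⟩, huv, huw⟩ := hu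
  have hmem (u' : V) (hu' : u' ∈ G.lineClass x u) : u' ∈ G.line v w ↔ u ∈ G.line v w := by
    rcases eq_or_twin_of_mem_lineClass hG hd hlc hxu hu' with rfl | ⟨-, htwin⟩
    · rfl
    have hu'v : u' ≠ v := by rintro rfl; exact hu_nmem_v ⟨hxu.ne', hu'.2.symm⟩
    have hu'w : u' ≠ w := by rintro rfl; exact hu_nmem_w ⟨hxu.ne', hu'.2.symm⟩
    exact (mem_line_iff_of_dist_eq
      (dist_eq_of_neighborSet_eq hG hd htwin (Ne.symm huv) (Ne.symm hu'v))
      (dist_eq_of_neighborSet_eq hG hd htwin (Ne.symm huw) (Ne.symm hu'w))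
      huv huw hu'v hu'w).symm
  by_cases hu_mem : u ∈ G.line v w
  · exact Or.inl fun u' hu' => (hmem u' hu').mpr hu_mem
  · exact Or.inr <| Set.eq_empty_of_forall_notMem fun u' ⟨hu', hu'_mem⟩ =>
      hu_mem ((hmem u' hu').mp hu'_mem)

lemma lineClass_subset_line_of_adj (hxv : G.Adj x v) (hvw : G.Adj v w) :
    G.lineClass x v ⊆ G.line v w := by
  intro c hc
  rcases eq_or_twin_of_mem_lineClass hG hd hlc hxv hc with rfl | ⟨hvc, htwin⟩
  · exact left_mem_line _ _
  have hcw : G.Adj c w := by rw [← mem_neighborSet, ← htwin]; exact hvw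
  rw [mem_line_iff_of_adj hG hvw, dist_eq_one_iff_adj.mpr hcw, Ne, dist_eq_one_iff_adj]
  exact fun h => hvc h.symm

lemma lineClass_inter_line_subset_of_dist_eq_two (hxv : G.Adj x v) (hvw : G.dist v w = 2) :
    G.lineClass x v ∩ G.line v w ⊆ {v, w} := by
  rintro c ⟨hc, hc_mem⟩
  rcases eq_or_twin_of_mem_lineClass hG hd hlc hxv hc with rfl | ⟨hvc, -⟩
  · exact Set.mem_insert _ _
  rcases (mem_line_iff_of_dist_eq_two hG hd hvw).mp hc_mem with h | h | ⟨h, -⟩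
  · exact Or.inl h
  · exact Or.inr h
  · exact absurd h hvc

end DiameterTwo

end SimpleGraph

theorem line_description_diam_two_general {V : Type*} (G : SimpleGraph V)
    (hG : G.Connected) (hlc : G.LocallyConnected) (hdiam : G.diam = 2)
    (x : V) {v w : V} (hvw : v ≠ w) :
    (∀ u : V, G.Adj x u → u ∉ G.lineClass x v ∪ G.lineClass x w ∪ {v, w} →
      G.lineClass x u ⊆ G.line v w ∨ G.lineClass x u ∩ G.line v w = ∅) ∧
    (G.Adj x v → G.Adj x w → G.Adj v w →
      G.lineClass x v ∪ G.lineClass x w ⊆ G.line v w) ∧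
    (G.Adj x v → G.Adj x w → ¬ G.Adj v w →
      (G.lineClass x v ∪ G.lineClass x w) ∩ G.line v w = {v, w}) := by
  have hd : G.ediam ≤ 2 := by
    rw [← ENat.natCast_toNat (ediam_ne_top_of_diam_ne_zero (by omega)), ← diam, hdiam]
    rfl
  refine ⟨fun u hxu hu => lineClass_subset_line_or_inter_line_eq_empty hG hd hlc hxu hu,
    fun hxv hxw hadj => ?_, fun hxv hxw hnadj => ?_⟩
  · refine Set.union_subset (lineClass_subset_line_of_adj hG hd hlc hxv hadj) ?_
    rw [line_comm]
    exact lineClass_subset_line_of_adj hG hd hlc hxw hadj.symm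
  have h2 : G.dist v w = 2 := dist_eq_two_of_not_adj hG hd hvw hnadj
  refine Set.Subset.antisymm ?_ ?_
  · rw [Set.union_inter_distrib_right]
    refine Set.union_subset (lineClass_inter_line_subset_of_dist_eq_two hG hd hlc hxv h2) ?_
    rw [line_comm, Set.pair_comm]
    exact lineClass_inter_line_subset_of_dist_eq_two hG hd hlc hxw (dist_comm.trans h2)
  · rw [Set.insert_subset_iff, Set.singleton_subset_iff]
    exact ⟨⟨Or.inl (mem_lineClass_self hxv.ne'), left_mem_line v w⟩,
      ⟨Or.inr (mem_lineClass_self hxw.ne'), right_mem_line v w⟩⟩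

theorem line_description_diam_two {V : Type*} [Fintype V] (G : SimpleGraph V)
    (hG : G.Connected) (hlc : G.LocallyConnected) (hdiam : G.diam = 2)
    (x : V) {v w : V} (hvw : v ≠ w) :
    (∀ u : V, G.Adj x u → u ∉ G.lineClass x v ∪ G.lineClass x w ∪ {v, w} →
      G.lineClass x u ⊆ G.line v w ∨ G.lineClass x u ∩ G.line v w = ∅) ∧
    (G.Adj x v → G.Adj x w → G.Adj v w →
      G.lineClass x v ∪ G.lineClass x w ⊆ G.line v w) ∧
    (G.Adj x v → G.Adj x w → ¬ G.Adj v w →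
      (G.lineClass x v ∪ G.lineClass x w) ∩ G.line v w = {v, w}) :=
  line_description_diam_two_general G hG hlc hdiam x hvw
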